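/- Let S be a closed subset of ℝ^d, and suppose w*_α minimizes f_α over S ∩ B̄_β and w* minimizes f over S ∩ B̄_β. Then |f_α(w*_α) − f(w*)| ≤ α·L₀·√(d/12), where L₀ := E[L₀(ξ)]. -/

import Mathlib

/-!
The mean `f = E[F(·, ξ)]` inherits from `F(·, ξ)` the Lipschitz constant `L₀ = E[L₀(ξ)]` on
`B̄_κ`, and `w + u ∈ B̄_κ` for `w ∈ B̄_β`, `u ∈ B̄_{α/2}`. Hence
`|f_α(w) - f(w)| ≤ L₀ E‖u‖ ≤ L₀ √(E‖u‖²)` on the feasible set. The uniform law on the cube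
`B̄_{α/2}` is the product of the uniform laws on `[-α/2, α/2]`, each with second moment
`α²/12`, so `E‖u‖² = d α²/12`. Finally, if `|f_α - f| ≤ ε` on a set, the minimum values of
`f_α` and `f` over that set differ by at most `ε`.
-/

open MeasureTheory Filter
open scoped Classical BigOperators

noncomputable section

/-- The closed `l∞`-ball of radius `r` centered at `0` in `ℝ^d`. -/
def Binf (d : ℕ) (r : ℝ) : Set (EuclideanSpace ℝ (Fin d)) := {z | ∀ i, |z i| ≤ r}

/-- The uniform probability distribution on the closed `l∞`-ball of radius `r` in `ℝ^d`. -/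
def unifMeas (d : ℕ) (r : ℝ) : Measure (EuclideanSpace ℝ (Fin d)) :=
  (volume (Binf d r))⁻¹ • volume.restrict (Binf d r)

/-- The point `w + u` with its `i`-th coordinate replaced by `w i + s`. -/
def shiftPt {d : ℕ} (s : ℝ) (w u : EuclideanSpace ℝ (Fin d)) (i : Fin d) :
    EuclideanSpace ℝ (Fin d) :=
  w + u + (s - u i) • EuclideanSpace.single i (1 : ℝ)

/-- The finite difference `df_i(w, u_{∖i})` of a function `f : ℝ^d → ℝ`. -/
def dfFD {d : ℕ} (α : ℝ) (f : EuclideanSpace ℝ (Fin d) → ℝ)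
    (i : Fin d) (w u : EuclideanSpace ℝ (Fin d)) : ℝ :=
  f (shiftPt (α / 2) w u i) - f (shiftPt (-(α / 2)) w u i)

/-- The finite-difference vector `dF(w,u,ξ)` whose `i`-th component is
`F(…, w_i + α/2, …, ξ) − F(…, w_i − α/2, …, ξ)`. -/
def dFvec {d p : ℕ} (α : ℝ)
    (F : EuclideanSpace ℝ (Fin d) → EuclideanSpace ℝ (Fin p) → ℝ)
    (w u : EuclideanSpace ℝ (Fin d)) (ξ : EuclideanSpace ℝ (Fin p)) :
    EuclideanSpace ℝ (Fin d) :=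
  ∑ i : Fin d,
    (F (shiftPt (α / 2) w u i) ξ - F (shiftPt (-(α / 2)) w u i) ξ) • EuclideanSpace.single i (1 : ℝ)

/-- `f(w) := E[F(w,ξ)]`. -/
def fbar {d p : ℕ} (μξ : Measure (EuclideanSpace ℝ (Fin p)))
    (F : EuclideanSpace ℝ (Fin d) → EuclideanSpace ℝ (Fin p) → ℝ)
    (w : EuclideanSpace ℝ (Fin d)) : ℝ := ∫ ξ, F w ξ ∂μξ

/-- The randomized smoothing `f_α(w) := E[f(w+u)]`, `u` uniform on `B̄_{α/2}`. -/
def smoothed {d : ℕ} (α : ℝ) (f : EuclideanSpace ℝ (Fin d) → ℝ)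
    (w : EuclideanSpace ℝ (Fin d)) : ℝ := ∫ u, f (w + u) ∂(unifMeas d (α / 2))

open ProbabilityTheory Set

lemma Binf_eq_preimage_pi (d : ℕ) (r : ℝ) :
    Binf d r = WithLp.ofLp ⁻¹' univ.pi fun _ : Fin d => Icc (-r) r := by
  ext z
  simp only [Binf, mem_ofPred_eq, mem_preimage, mem_univ_pi, mem_Icc, abs_le]

lemma measurableSet_Binf (d : ℕ) (r : ℝ) : MeasurableSet (Binf d r) := by
  rw [Binf_eq_preimage_pi]
  exact (MeasurableSet.univ_pi fun _ => measurableSet_Icc).preimage (by fun_prop)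

lemma isCompact_Binf (d : ℕ) (r : ℝ) : IsCompact (Binf d r) := by
  rw [Binf_eq_preimage_pi]
  exact (PiLp.continuousLinearEquiv 2 ℝ _).toHomeomorph.isCompact_preimage.2
    (isCompact_univ_pi fun _ => isCompact_Icc)

lemma Binf_mono {d : ℕ} {a b : ℝ} (h : a ≤ b) : Binf d a ⊆ Binf d b :=
  fun _ hz i => (hz i).trans h

lemma add_mem_Binf {d : ℕ} {a b : ℝ} {x y : EuclideanSpace ℝ (Fin d)} (hx : x ∈ Binf d a)
    (hy : y ∈ Binf d b) : x + y ∈ Binf d (a + b) :=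
  fun i => (abs_add_le (x i) (y i)).trans (add_le_add (hx i) (hy i))

lemma Binf_nontrivial {d : ℕ} {r : ℝ} (hd : 0 < d) (hr : 0 < r) : (Binf d r).Nontrivial := by
  refine ⟨0, fun i => by simpa using hr.le, WithLp.toLp 2 fun _ => r,
    fun i => by simp [abs_of_pos hr], fun h => ?_⟩
  have := congrArg (fun z : EuclideanSpace ℝ (Fin d) => z ⟨0, hd⟩) h
  simp only [PiLp.zero_apply] at this
  linarith

lemma MeasurableEquiv.cond_map {α β : Type*} [MeasurableSpace α] [MeasurableSpace β]
    (e : α ≃ᵐ β) (μ : Measure α) (s : Set β) : (μ.map e)[|s] = (μ[|e ⁻¹' s]).map e := by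
  ext t ht
  rw [e.map_apply, cond_apply' ht, cond_apply' (e.measurable ht), e.map_apply, e.map_apply,
    preimage_inter]

lemma MeasureTheory.Measure.pi_cond {ι : Type*} [Fintype ι] {α : ι → Type*}
    [∀ i, MeasurableSpace (α i)] (μ : ∀ i, Measure (α i)) [∀ i, SigmaFinite (μ i)]
    {s : ∀ i, Set (α i)} (hs : ∀ i, MeasurableSet (s i)) (hfin : ∀ i, μ i (s i) ≠ ⊤) :
    Measure.pi (fun i => (μ i)[|s i]) = (Measure.pi μ)[|univ.pi s] := by
  refine Measure.pi_eq fun t ht => ?_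
  rw [cond_apply (MeasurableSet.univ_pi hs), ← pi_inter_distrib, Measure.pi_pi, Measure.pi_pi,
    ENNReal.prod_inv_distrib (fun i _ j _ _ => .inr (hfin j)), ← Finset.prod_mul_distrib]
  simp only [cond_apply (hs _)]

lemma measurePreserving_toLp_unifMeas (d : ℕ) (r : ℝ) :
    MeasurePreserving (WithLp.toLp 2)
      (Measure.pi fun _ : Fin d => volume[|Icc (-r) r]) (unifMeas d r) := by
  refine ⟨(MeasurableEquiv.toLp 2 (Fin d → ℝ)).measurable, ?_⟩
  have hbox : MeasurableEquiv.toLp 2 (Fin d → ℝ) ⁻¹' Binf d r = univ.pi fun _ => Icc (-r) r := by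
    rw [Binf_eq_preimage_pi]
    rfl
  change Measure.map (MeasurableEquiv.toLp 2 (Fin d → ℝ)) _ = _
  rw [Measure.pi_cond _ (fun _ => measurableSet_Icc) (fun _ => measure_Icc_lt_top.ne),
    ← volume_pi, ← hbox, ← MeasurableEquiv.cond_map]
  exact congrArg (·[|Binf d r]) (PiLp.volume_preserving_toLp (Fin d)).map_eq

lemma isProbabilityMeasure_cond_Icc {a b : ℝ} (hab : a < b) :
    IsProbabilityMeasure (volume[|Icc a b]) :=
  cond_isProbabilityMeasure_of_finite (by simpa using hab) measure_Icc_lt_top.ne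

lemma isProbabilityMeasure_unifMeas (d : ℕ) {r : ℝ} (hr : 0 < r) :
    IsProbabilityMeasure (unifMeas d r) := by
  have := isProbabilityMeasure_cond_Icc (neg_lt_self hr)
  rw [← (measurePreserving_toLp_unifMeas d r).map_eq]
  exact Measure.isProbabilityMeasure_map (by fun_prop)

lemma integral_sq_cond_Icc {r : ℝ} (hr : 0 < r) : ∫ t, t ^ 2 ∂volume[|Icc (-r) r] = r ^ 2 / 3 := by
  rw [ProbabilityTheory.cond, integral_smul_measure, integral_Icc_eq_integral_Ioc,
    ← intervalIntegral.integral_of_le (by linarith), integral_pow, Real.volume_Icc,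
    ENNReal.toReal_inv, ENNReal.toReal_ofReal (by linarith), smul_eq_mul]
  field_simp
  ring

lemma integral_norm_sq_unifMeas (d : ℕ) {r : ℝ} (hr : 0 < r) :
    ∫ u, ‖u‖ ^ 2 ∂unifMeas d r = d * (r ^ 2 / 3) := by
  have := isProbabilityMeasure_cond_Icc (neg_lt_self hr)
  have hsq : Integrable (fun t : ℝ => t ^ 2) (volume[|Icc (-r) r]) :=
    Integrable.smul_measure (μ := volume.restrict (Icc (-r) r)) (continuous_pow 2).integrableOn_Icc
      (ENNReal.inv_ne_top.2 (by simpa using hr))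
  have hcoord (i : Fin d) :
      MeasurePreserving (fun x : Fin d → ℝ => x i) (Measure.pi fun _ => volume[|Icc (-r) r])
        (volume[|Icc (-r) r]) :=
    measurePreserving_eval _ i
  have hmoment (i : Fin d) :
      ∫ x : Fin d → ℝ, x i ^ 2 ∂(Measure.pi fun _ => volume[|Icc (-r) r]) = r ^ 2 / 3 := by
    rw [← integral_map (hcoord i).aemeasurable (continuous_pow 2).aestronglyMeasurable,
      (hcoord i).map_eq, integral_sq_cond_Icc hr]
  rw [← (measurePreserving_toLp_unifMeas d r).integral_comp
    (MeasurableEquiv.toLp 2 (Fin d → ℝ)).measurableEmbedding]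
  simp only [EuclideanSpace.real_norm_sq_eq]
  rw [integral_finsetSum (f := fun i (x : Fin d → ℝ) => x i ^ 2) _
    fun i _ => (hcoord i).integrable_comp_of_integrable hsq]
  simp [hmoment]

lemma integral_le_sqrt_integral_sq {Ω : Type*} [MeasurableSpace Ω] {μ : Measure Ω}
    [IsProbabilityMeasure μ] {X : Ω → ℝ} (hX : MemLp X 2 μ) :
    ∫ ω, X ω ∂μ ≤ √(∫ ω, X ω ^ 2 ∂μ) := by
  have hvar := variance_eq_sub hX
  have := variance_nonneg X μ
  refine (le_abs_self _).trans (Real.abs_le_sqrt ?_)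
  simp only [Pi.pow_apply] at hvar
  linarith

lemma ae_mem_Binf_unifMeas (d : ℕ) (r : ℝ) : ∀ᵐ u ∂unifMeas d r, u ∈ Binf d r :=
  ae_cond_mem (measurableSet_Binf d r)

lemma ContinuousOn.integrable_unifMeas {d : ℕ} {r : ℝ} {g : EuclideanSpace ℝ (Fin d) → ℝ}
    (hg : ContinuousOn g (Binf d r)) : Integrable g (unifMeas d r) := by
  have : IsFiniteMeasure (unifMeas d r) := inferInstanceAs (IsFiniteMeasure (volume[|Binf d r]))
  rw [← Measure.restrict_eq_self_of_ae_mem (ae_mem_Binf_unifMeas d r)]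
  exact hg.integrableOn_compact (isCompact_Binf d r)

lemma integral_norm_unifMeas_le (d : ℕ) {r : ℝ} (hr : 0 < r) :
    ∫ u, ‖u‖ ∂unifMeas d r ≤ r * √(d / 3) := by
  have := isProbabilityMeasure_unifMeas d hr
  have hL2 : MemLp (fun u : EuclideanSpace ℝ (Fin d) => ‖u‖) 2 (unifMeas d r) :=
    (memLp_two_iff_integrable_sq continuous_norm.aestronglyMeasurable).2
      (continuous_norm.pow 2).continuousOn.integrable_unifMeas
  calc ∫ u, ‖u‖ ∂unifMeas d r ≤ √(∫ u, ‖u‖ ^ 2 ∂unifMeas d r) := integral_le_sqrt_integral_sq hL2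
    _ = r * √(d / 3) := by
      rw [integral_norm_sq_unifMeas d hr, show (d : ℝ) * (r ^ 2 / 3) = r ^ 2 * (d / 3) by ring,
        Real.sqrt_mul (sq_nonneg r), Real.sqrt_sq hr.le]

lemma abs_smoothed_sub_le {d : ℕ} {α : ℝ} (hα : 0 < α) {f : EuclideanSpace ℝ (Fin d) → ℝ}
    {s : Set (EuclideanSpace ℝ (Fin d))} {K : NNReal} (hf : LipschitzOnWith K f s)
    {w : EuclideanSpace ℝ (Fin d)} (hw : w ∈ s) (hws : ∀ u ∈ Binf d (α / 2), w + u ∈ s) :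
    |smoothed α f w - f w| ≤ α * K * √(d / 12) := by
  have hr : 0 < α / 2 := half_pos hα
  have := isProbabilityMeasure_unifMeas d hr
  have hint : Integrable (fun u => f (w + u)) (unifMeas d (α / 2)) :=
    (hf.continuousOn.comp (continuous_const_add w).continuousOn hws).integrable_unifMeas
  have hdist : ∀ᵐ u ∂unifMeas d (α / 2), ‖f (w + u) - f w‖ ≤ K * ‖u‖ := by
    filter_upwards [ae_mem_Binf_unifMeas d (α / 2)] with u hu
    simpa only [dist_eq_norm, add_sub_cancel_left] using hf.dist_le_mul (w + u) (hws u hu) w hw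
  calc |smoothed α f w - f w| = ‖∫ u, (f (w + u) - f w) ∂unifMeas d (α / 2)‖ := by
        rw [integral_sub hint (integrable_const _), integral_const, probReal_univ, one_smul,
          Real.norm_eq_abs, smoothed]
    _ ≤ ∫ u, K * ‖u‖ ∂unifMeas d (α / 2) :=
        norm_integral_le_of_norm_le (continuous_norm.continuousOn.integrable_unifMeas.const_mul _)
          hdist
    _ ≤ K * (α / 2 * √(d / 3)) := by
        rw [integral_const_mul]
        gcongr
        exact integral_norm_unifMeas_le d hr
    _ = α * K * √(d / 12) := by
        rw [show (d : ℝ) / 3 = 2 ^ 2 * (d / 12) by ring, Real.sqrt_mul (by positivity),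
          Real.sqrt_sq zero_le_two]
        ring

lemma ae_nonneg_of_abs_sub_le_mul_norm {E Ω : Type*} [NormedAddCommGroup E] [MeasurableSpace Ω]
    {μ : Measure Ω} {F : E → Ω → ℝ} {L0 : Ω → ℝ} {s : Set E} (hs : s.Nontrivial)
    (hlip : ∀ᵐ ξ ∂μ, ∀ w ∈ s, ∀ w' ∈ s, |F w ξ - F w' ξ| ≤ L0 ξ * ‖w - w'‖) :
    ∀ᵐ ξ ∂μ, 0 ≤ L0 ξ := by
  obtain ⟨x, hx, y, hy, hxy⟩ := hs
  filter_upwards [hlip] with ξ h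
  exact nonneg_of_mul_nonneg_left ((abs_nonneg _).trans (h x hx y hy))
    (norm_pos_iff.2 (sub_ne_zero.2 hxy))

lemma lipschitzOnWith_fbar {d p : ℕ} {μ : Measure (EuclideanSpace ℝ (Fin p))}
    {F : EuclideanSpace ℝ (Fin d) → EuclideanSpace ℝ (Fin p) → ℝ}
    {L0 : EuclideanSpace ℝ (Fin p) → ℝ} {s : Set (EuclideanSpace ℝ (Fin d))} (hL0 : Integrable L0 μ)
    (hF : ∀ w ∈ s, Integrable (fun ξ => F w ξ) μ)
    (hlip : ∀ᵐ ξ ∂μ, ∀ w ∈ s, ∀ w' ∈ s, |F w ξ - F w' ξ| ≤ L0 ξ * ‖w - w'‖) :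
    LipschitzOnWith (∫ ξ, L0 ξ ∂μ).toNNReal (fbar μ F) s := by
  refine LipschitzOnWith.of_dist_le_mul fun w hw w' hw' => ?_
  calc dist (fbar μ F w) (fbar μ F w') = ‖∫ ξ, (F w ξ - F w' ξ) ∂μ‖ := by
        rw [integral_sub (hF w hw) (hF w' hw'), dist_eq_norm, fbar, fbar]
    _ ≤ ∫ ξ, L0 ξ * ‖w - w'‖ ∂μ :=
        norm_integral_le_of_norm_le (hL0.mul_const _) (hlip.mono fun ξ h => h w hw w' hw')
    _ ≤ (∫ ξ, L0 ξ ∂μ).toNNReal * dist w w' := by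
        rw [integral_mul_const, dist_eq_norm]
        gcongr
        exact Real.le_coe_toNNReal _

lemma abs_sub_le_of_isMinOn {X : Type*} {f g : X → ℝ} {s : Set X} {a b : X} {ε : ℝ}
    (ha : a ∈ s) (hb : b ∈ s) (hga : IsMinOn g s a) (hfb : IsMinOn f s b)
    (hfg : ∀ x ∈ s, |g x - f x| ≤ ε) : |g a - f b| ≤ ε := by
  have hgb := isMinOn_iff.1 hga b hb
  have hfa := isMinOn_iff.1 hfb a ha
  have ha' := abs_le.1 (hfg a ha)
  have hb' := abs_le.1 (hfg b hb)
  rw [abs_le]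
  constructor <;> linarith

theorem smoothed_min_value_error_general
    (d p : ℕ) (α β κ : ℝ) (hα : 0 < α) (hβ : 0 < β) (hκ : β + α / 2 < κ)
    (μξ : Measure (EuclideanSpace ℝ (Fin p))) [IsProbabilityMeasure μξ]
    (F : EuclideanSpace ℝ (Fin d) → EuclideanSpace ℝ (Fin p) → ℝ)
    (L0 : EuclideanSpace ℝ (Fin p) → ℝ) (hL0meas : Measurable L0)
    (hL0sq : Integrable (fun ξ => (L0 ξ) ^ 2) μξ)
    (hlip : ∀ᵐ ξ ∂μξ, ∀ w ∈ Binf d κ, ∀ w' ∈ Binf d κ,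
      |F w ξ - F w' ξ| ≤ L0 ξ * ‖w - w'‖)
    (hFint : ∀ w ∈ Binf d κ, Integrable (fun ξ => F w ξ) μξ)
    (S : Set (EuclideanSpace ℝ (Fin d)))
    (wα wstar : EuclideanSpace ℝ (Fin d))
    (hwα : wα ∈ S ∩ Binf d β)
    (hwαmin : ∀ x ∈ S ∩ Binf d β, smoothed α (fbar μξ F) wα ≤ smoothed α (fbar μξ F) x)
    (hwstar : wstar ∈ S ∩ Binf d β)
    (hwstarmin : ∀ x ∈ S ∩ Binf d β, fbar μξ F wstar ≤ fbar μξ F x) :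
    |smoothed α (fbar μξ F) wα - fbar μξ F wstar| ≤ α * (∫ ξ, L0 ξ ∂μξ) * Real.sqrt (d / 12) := by
  have hL0 : Integrable L0 μξ :=
    ((memLp_two_iff_integrable_sq hL0meas.aestronglyMeasurable).2 hL0sq).integrable one_le_two
  have hf := lipschitzOnWith_fbar hL0 hFint hlip
  have herr : ∀ w ∈ S ∩ Binf d β, |smoothed α (fbar μξ F) w - fbar μξ F w|
      ≤ α * (∫ ξ, L0 ξ ∂μξ).toNNReal * √(d / 12) := fun w hw =>
    abs_smoothed_sub_le hα hf (Binf_mono (by linarith) hw.2)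
      fun u hu => Binf_mono hκ.le (add_mem_Binf hw.2 hu)
  refine (abs_sub_le_of_isMinOn hwα hwstar (isMinOn_iff.2 hwαmin) (isMinOn_iff.2 hwstarmin)
    herr).trans_eq ?_
  obtain rfl | hd := d.eq_zero_or_pos
  -- For `d = 0` the sign of `L0` is unconstrained, but both sides vanish.
  · simp
  · rw [Real.coe_toNNReal _ (integral_nonneg_of_ae
      (ae_nonneg_of_abs_sub_le_mul_norm (Binf_nontrivial hd (by linarith)) hlip))]

/-- Let `S ⊆ ℝ^d` be closed, let `wα*` minimize `f_α` over `S ∩ B̄_β` and let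
`w*` minimize `f` over `S ∩ B̄_β`. Then `|f_α(wα*) − f(w*)| ≤ α·L₀·√(d/12)`,
where `L₀ := E[L₀(ξ)]`. -/
theorem smoothed_min_value_error
    (d p : ℕ) (α β κ : ℝ) (hα : 0 < α) (hβ : 0 < β) (hκ : β + α / 2 < κ)
    (μξ : Measure (EuclideanSpace ℝ (Fin p))) [IsProbabilityMeasure μξ]
    (F : EuclideanSpace ℝ (Fin d) → EuclideanSpace ℝ (Fin p) → ℝ)
    (hFmeas : Measurable (Function.uncurry F))
    (hFcont : ∀ ξ, ContinuousOn (fun w => F w ξ) (Binf d κ))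
    (L0 : EuclideanSpace ℝ (Fin p) → ℝ) (hL0meas : Measurable L0)
    (hL0sq : Integrable (fun ξ => (L0 ξ) ^ 2) μξ)
    (hlip : ∀ᵐ ξ ∂μξ, ∀ w ∈ Binf d κ, ∀ w' ∈ Binf d κ,
      |F w ξ - F w' ξ| ≤ L0 ξ * ‖w - w'‖)
    (hFint : ∀ w ∈ Binf d κ, Integrable (fun ξ => F w ξ) μξ)
    (S : Set (EuclideanSpace ℝ (Fin d))) (hS : IsClosed S)
    (wα wstar : EuclideanSpace ℝ (Fin d))
    (hwα : wα ∈ S ∩ Binf d β)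
    (hwαmin : ∀ x ∈ S ∩ Binf d β, smoothed α (fbar μξ F) wα ≤ smoothed α (fbar μξ F) x)
    (hwstar : wstar ∈ S ∩ Binf d β)
    (hwstarmin : ∀ x ∈ S ∩ Binf d β, fbar μξ F wstar ≤ fbar μξ F x) :
    |smoothed α (fbar μξ F) wα - fbar μξ F wstar| ≤ α * (∫ ξ, L0 ξ ∂μξ) * Real.sqrt (d / 12) :=
  smoothed_min_value_error_general d p α β κ hα hβ hκ μξ F L0 hL0meas hL0sq hlip hFint S wα wstar
    hwα hwαmin hwstar hwstarmin
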